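/- For every natural number k and every z ≠ 0: d^k/dz^k [H₋₁(z)/z] = 2·k!·∑_{i=0}^{⌊k/2⌋} 1/(i!·(k-2i)!) · H_{-k-1+i}(z)/(2z)^{i+1}, where H_ν is the Struve function of (possibly negative) integer order ν. -/

import Mathlib

/-!
Differentiating the defining series termwise and using `Γ(s + 1) = s Γ(s)` gives the recurrence
`H_ν' = H_{ν-1} - ν H_ν / z` on `z ≠ 0`. Hence the derivative of `H_{-k-1+i}(z) / (2z)^(i+1)`
is `H_{-k-2+i}(z) / (2z)^(i+1) + 2 (k - 2i) H_{-k-1+i}(z) / (2z)^(i+2)`, and differentiating the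
sum for `k` gives the sum for `k + 1` because the coefficients `a k i = k! / (i! (k-2i)!)` satisfy
`a (k+1) (j+1) = a k (j+1) + 2 (k - 2j) a k j`. Induction on `k` concludes.
-/
open Real Finset

/-- The Struve function of integer order `ν` (possibly negative). -/
noncomputable def struveH (ν : ℤ) (z : ℝ) : ℝ :=
  ∑' m : ℕ, (-1)^m * (z / 2)^(2 * (m : ℤ) + ν + 1) /
    (Real.Gamma ((m : ℝ) + 3/2) * Real.Gamma ((m : ℝ) + ν + 3/2))

section EvenPowerSeries

variable {c : ℕ → ℝ}

lemma zpow_two_mul_add {y : ℝ} (hy : y ≠ 0) (m : ℕ) (e : ℤ) :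
    y ^ (2 * (m : ℤ) + e) = (y ^ 2) ^ m * y ^ e := by
  rw [zpow_add₀ hy, zpow_mul, zpow_ofNat, zpow_natCast]

lemma summable_natCast_mul_abs_mul_pow (hc : ∀ R, Summable fun m => c m * R ^ m) (R : ℝ) :
    Summable fun m : ℕ => (m : ℝ) * |c m * R ^ m| := by
  refine .of_nonneg_of_le (fun m => by positivity) (fun m => ?_) (hc (2 * R)).abs
  have hm : (m : ℝ) ≤ 2 ^ m := by exact_mod_cast Nat.lt_two_pow_self.le
  rw [mul_pow, abs_mul, abs_mul, abs_mul, abs_pow, abs_pow, abs_two]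
  calc (m : ℝ) * (|c m| * |R| ^ m) ≤ 2 ^ m * (|c m| * |R| ^ m) := by gcongr
    _ = _ := by ring

lemma summable_mul_zpow (hc : ∀ R, Summable fun m => c m * R ^ m) (e : ℤ) {y : ℝ}
    (hy : y ≠ 0) : Summable fun m => c m * y ^ (2 * (m : ℤ) + e) := by
  simp_rw [zpow_two_mul_add hy, ← mul_assoc]
  exact (hc (y ^ 2)).mul_right _

theorem hasDerivAt_tsum_mul_zpow (hc : ∀ R, Summable fun m => c m * R ^ m) (e : ℤ) {x : ℝ}
    (hx : x ≠ 0) :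
    HasDerivAt (fun y => ∑' m, c m * y ^ (2 * (m : ℤ) + e))
      (∑' m, c m * ((2 * m + e : ℤ) : ℝ) * x ^ (2 * (m : ℤ) + e - 1)) x := by
  set r := |x| / 2 with hr_def
  have hr : 0 < r := by positivity
  have hne : ∀ y ∈ Metric.closedBall x r, y ≠ 0 := by
    intro y hy h0
    rw [h0, Metric.mem_closedBall, dist_zero_left, Real.norm_eq_abs] at hy
    linarith
  have hsq : ∀ y ∈ Metric.closedBall x r, y ^ 2 ≤ (2 * x) ^ 2 := by
    intro y hy
    rw [Metric.mem_closedBall, Real.dist_eq] at hy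
    have : |y| ≤ |2 * x| := by
      rw [abs_mul, abs_two]
      linarith [abs_sub_abs_le_abs_sub y x]
    exact sq_le_sq.mpr this
  obtain ⟨K, hK⟩ := (isCompact_closedBall x r).exists_bound_of_continuousOn
    (f := fun y => y ^ (e - 1))
    fun y hy => (continuousAt_zpow₀ _ _ (.inl (hne y hy))).continuousWithinAt
  set u : ℕ → ℝ := fun m =>
    K * (2 * ((m : ℝ) * |c m * ((2 * x) ^ 2) ^ m|) + |(e : ℝ)| * |c m * ((2 * x) ^ 2) ^ m|)
  have hu : Summable u :=
    (((summable_natCast_mul_abs_mul_pow hc _).mul_left 2).add ((hc _).abs.mul_left _)).mul_left K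
  refine hasDerivAt_tsum_of_isPreconnected (g := fun m y => c m * y ^ (2 * (m : ℤ) + e))
    (g' := fun m y => c m * ((2 * m + e : ℤ) : ℝ) * y ^ (2 * (m : ℤ) + e - 1))
    hu Metric.isOpen_ball (convex_ball x r).isPreconnected
    (fun m y hy => ?_) (fun m y hy => ?_) (Metric.mem_ball_self hr) (summable_mul_zpow hc e hx)
    (Metric.mem_ball_self hr)
  · rw [mul_assoc]
    exact (hasDerivAt_zpow _ y (.inl (hne y (Metric.ball_subset_closedBall hy)))).const_mul (c m)
  · have hy' := Metric.ball_subset_closedBall hy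
    rw [show 2 * (m : ℤ) + e - 1 = 2 * m + (e - 1) by ring, zpow_two_mul_add (hne y hy')]
    have h1 : |((2 * m + e : ℤ) : ℝ)| ≤ 2 * m + |(e : ℝ)| := by
      push_cast
      exact (abs_add_le _ _).trans (by rw [abs_of_nonneg (by positivity)])
    have h2 : ‖y ^ (e - 1)‖ ≤ K := hK y hy'
    have h3 : (y ^ 2) ^ m ≤ ((2 * x) ^ 2) ^ m := pow_le_pow_left₀ (sq_nonneg y) (hsq y hy') m
    have h4 : |((2 * x) ^ 2) ^ m| = ((2 * x) ^ 2) ^ m := abs_of_nonneg (by positivity)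
    calc ‖c m * ((2 * m + e : ℤ) : ℝ) * ((y ^ 2) ^ m * y ^ (e - 1))‖
        = |c m| * |((2 * m + e : ℤ) : ℝ)| * ((y ^ 2) ^ m * ‖y ^ (e - 1)‖) := by
          simp only [norm_mul, Real.norm_eq_abs, abs_pow, sq_abs]
      _ ≤ |c m| * (2 * m + |(e : ℝ)|) * (((2 * x) ^ 2) ^ m * K) := by gcongr
      _ = u m := by simp only [u, abs_mul, h4]; ring

end EvenPowerSeries

noncomputable def struveCoeff (ν : ℤ) (m : ℕ) : ℝ :=
  (-1) ^ m / (Gamma (m + 3 / 2) * Gamma (m + ν + 3 / 2))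

lemma struveH_eq_tsum (ν : ℤ) (z : ℝ) :
    struveH ν z = ∑' m : ℕ, struveCoeff ν m * (z / 2) ^ (2 * (m : ℤ) + (ν + 1)) := by
  refine tsum_congr fun m => ?_
  rw [struveCoeff, ← add_assoc, div_mul_eq_mul_div]

lemma struveCoeff_sub_one (ν : ℤ) (m : ℕ) :
    struveCoeff (ν - 1) m = (m + ν + 1 / 2) * struveCoeff ν m := by
  have hne : (m : ℝ) + ν + 1 / 2 ≠ 0 := by
    intro h
    have : 2 * ((m : ℤ) + ν) + 1 = 0 := by
      exact_mod_cast (by linarith : 2 * ((m : ℝ) + ν) + 1 = 0)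
    omega
  have hΓ :
      Gamma (m + ν + 3 / 2) = (m + ν + 1 / 2) * Gamma (m + ((ν - 1 : ℤ) : ℝ) + 3 / 2) := by
    rw [show (m : ℝ) + ((ν - 1 : ℤ) : ℝ) + 3 / 2 = m + ν + 1 / 2 by push_cast; ring,
      ← Gamma_add_one hne]
    ring_nf
  rw [struveCoeff, struveCoeff, hΓ, mul_left_comm (Gamma _), ← mul_div_assoc,
    mul_div_mul_left _ _ hne]

lemma summable_struveCoeff_mul_pow (ν : ℤ) (R : ℝ) :
    Summable fun m => struveCoeff ν m * R ^ m := by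
  refine .of_norm_bounded_eventually_nat (Real.summable_pow_div_factorial |R|) ?_
  filter_upwards [Filter.eventually_ge_atTop (ν.natAbs + 1)] with m hm
  have hmono := Gamma_strictMonoOn_Ici.monotoneOn
  have h1 : (m.factorial : ℝ) ≤ Gamma (m + 3 / 2) := by
    have : (1 : ℝ) ≤ m := by exact_mod_cast (by omega : 1 ≤ m)
    rw [← Gamma_nat_eq_factorial]
    exact hmono (Set.mem_Ici.2 (by linarith)) (Set.mem_Ici.2 (by linarith)) (by linarith)
  have h2 : 1 ≤ Gamma (m + ν + 3 / 2) := by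
    have : (1 : ℝ) ≤ m + ν := by exact_mod_cast (by omega : (1 : ℤ) ≤ m + ν)
    rw [← Gamma_two]
    exact hmono Set.self_mem_Ici (Set.mem_Ici.2 (by linarith)) (by linarith)
  rw [struveCoeff, norm_mul, norm_div, norm_pow, norm_neg, norm_one, one_pow, norm_pow,
    Real.norm_eq_abs, Real.norm_eq_abs, abs_of_pos (by positivity), one_div_mul_eq_div]
  gcongr
  nlinarith

theorem hasDerivAt_struveH (ν : ℤ) {z : ℝ} (hz : z ≠ 0) :
    HasDerivAt (struveH ν) (struveH (ν - 1) z - ν * struveH ν z / z) z := by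
  have hz2 : z / 2 ≠ 0 := div_ne_zero hz two_ne_zero
  have hseries := (hasDerivAt_tsum_mul_zpow (summable_struveCoeff_mul_pow ν) (ν + 1) hz2).comp z
    ((hasDerivAt_id' z).div_const 2)
  have hsum (μ : ℤ) :
      HasSum (fun m : ℕ => struveCoeff μ m * (z / 2) ^ (2 * (m : ℤ) + (μ + 1)))
        (struveH μ z) := by
    rw [struveH_eq_tsum]
    exact (summable_mul_zpow (summable_struveCoeff_mul_pow μ) _ hz2).hasSum
  have hdiff := (hsum (ν - 1)).sub ((hsum ν).mul_left (ν / z))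
  have hfun : struveH ν = (fun w => ∑' m : ℕ, struveCoeff ν m * w ^ (2 * (m : ℤ) + (ν + 1))) ∘
      (· / 2) := funext (struveH_eq_tsum ν)
  rw [← hfun] at hseries
  refine hseries.congr_deriv ?_
  rw [mul_div_right_comm, ← hdiff.tsum_eq, ← tsum_mul_right]
  refine tsum_congr fun m => ?_
  rw [struveCoeff_sub_one, sub_add_cancel, show 2 * (m : ℤ) + (ν + 1) - 1 = 2 * m + ν by ring,
    ← add_assoc, zpow_add_one₀ hz2]
  field_simp
  push_cast
  ring

/-- Up to sign, `k! / (i! (k-2i)!)` is the coefficient of `(2x)^(k-2i)` in the Hermite polynomial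
`H_k`. Extending it by `0` to `2i > k` lets the sums below run over `range (k + 1)` for either
parity of `k`. -/
noncomputable def hermiteCoeff (k i : ℕ) : ℝ :=
  if 2 * i ≤ k then k.factorial / (i.factorial * (k - 2 * i).factorial) else 0

lemma hermiteCoeff_zero_right (k : ℕ) : hermiteCoeff k 0 = 1 := by
  simp [hermiteCoeff, Nat.factorial_ne_zero]

lemma hermiteCoeff_of_lt {k i : ℕ} (h : k < 2 * i) : hermiteCoeff k i = 0 :=
  if_neg (by omega)

lemma hermiteCoeff_succ_succ (k j : ℕ) :
    hermiteCoeff (k + 1) (j + 1) = hermiteCoeff k (j + 1) + 2 * (k - 2 * j) * hermiteCoeff k j := by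
  rcases lt_or_ge k (2 * j + 2) with h | h
  · rcases (by omega : k < 2 * j ∨ k = 2 * j ∨ k = 2 * j + 1) with h | rfl | rfl
    · rw [hermiteCoeff_of_lt (by omega), hermiteCoeff_of_lt (by omega), hermiteCoeff_of_lt h]
      ring
    · rw [hermiteCoeff_of_lt (by omega), hermiteCoeff_of_lt (by omega)]
      push_cast
      ring
    · rw [hermiteCoeff_of_lt (by omega : 2 * j + 1 < 2 * (j + 1))]
      simp only [hermiteCoeff, if_pos (by omega : 2 * (j + 1) ≤ 2 * j + 1 + 1),
        if_pos (by omega : 2 * j ≤ 2 * j + 1), show 2 * j + 1 + 1 - 2 * (j + 1) = 0 by omega,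
        show 2 * j + 1 - 2 * j = 1 by omega, Nat.factorial_succ]
      field_simp
      push_cast
      ring
  · obtain ⟨b, rfl⟩ := Nat.exists_eq_add_of_le h
    simp only [hermiteCoeff, if_pos (by omega : 2 * (j + 1) ≤ 2 * j + 2 + b + 1),
      if_pos (by omega : 2 * (j + 1) ≤ 2 * j + 2 + b),
      if_pos (by omega : 2 * j ≤ 2 * j + 2 + b),
      show 2 * j + 2 + b + 1 - 2 * (j + 1) = b + 1 by omega,
      show 2 * j + 2 + b - 2 * (j + 1) = b by omega, show 2 * j + 2 + b - 2 * j = b + 2 by omega,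
      Nat.factorial_succ]
    field_simp
    push_cast
    ring

lemma sum_hermiteCoeff_succ_mul (k : ℕ) (q : ℕ → ℝ) :
    ∑ i ∈ range (k + 2), hermiteCoeff (k + 1) i * q i =
      ∑ i ∈ range (k + 1), hermiteCoeff k i * (q i + 2 * (k - 2 * i) * q (i + 1)) := by
  rw [sum_range_succ', hermiteCoeff_zero_right]
  simp_rw [hermiteCoeff_succ_succ, mul_add, add_mul, sum_add_distrib]
  rw [sum_range_succ (fun i => hermiteCoeff k (i + 1) * q (i + 1)),
    hermiteCoeff_of_lt (by omega : k < 2 * (k + 1)),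
    sum_range_succ' (fun i => hermiteCoeff k i * q i), hermiteCoeff_zero_right]
  have hswap : ∀ i ∈ range (k + 1), hermiteCoeff k i * (2 * (k - 2 * i) * q (i + 1)) =
      2 * (k - 2 * i) * hermiteCoeff k i * q (i + 1) := fun i _ => by ring
  rw [sum_congr rfl hswap]
  ring

noncomputable def struveTerm (k i : ℕ) (z : ℝ) : ℝ :=
  struveH (-(k : ℤ) - 1 + i) z / (2 * z) ^ (i + 1)

lemma hasDerivAt_struveTerm (k i : ℕ) {z : ℝ} (hz : z ≠ 0) :
    HasDerivAt (struveTerm k i)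
      (struveTerm (k + 1) i z + 2 * (k - 2 * i) * struveTerm (k + 1) (i + 1) z) z := by
  have hpow : HasDerivAt (fun x => (2 * x) ^ (i + 1)) ((i + 1 : ℕ) * (2 * z) ^ i * 2) z := by
    simpa using ((hasDerivAt_id z).const_mul 2).fun_pow (i + 1)
  have hquot := (hasDerivAt_struveH (-(k : ℤ) - 1 + i) hz).div hpow
    (pow_ne_zero _ (mul_ne_zero two_ne_zero hz))
  refine hquot.congr_deriv ?_
  have e1 : -((k + 1 : ℕ) : ℤ) - 1 + (i : ℕ) = -(k : ℤ) - 1 + i - 1 := by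
    push_cast; ring
  have e2 : -((k + 1 : ℕ) : ℤ) - 1 + ((i + 1 : ℕ) : ℤ) = -(k : ℤ) - 1 + i := by
    push_cast; ring
  rw [struveTerm, struveTerm, e1, e2]
  field_simp
  push_cast
  ring

noncomputable def struveIterSum (k : ℕ) (z : ℝ) : ℝ :=
  ∑ i ∈ range (k + 1), hermiteCoeff k i * struveTerm k i z

lemma hasDerivAt_struveIterSum (k : ℕ) {z : ℝ} (hz : z ≠ 0) :
    HasDerivAt (struveIterSum k) (struveIterSum (k + 1) z) z := by
  rw [struveIterSum, sum_hermiteCoeff_succ_mul]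
  exact HasDerivAt.fun_sum fun i _ => (hasDerivAt_struveTerm k i hz).const_mul (hermiteCoeff k i)

lemma iteratedDeriv_struveH_neg_one_div_eq_two_mul (k : ℕ) {z : ℝ} (hz : z ≠ 0) :
    iteratedDeriv k (fun x => struveH (-1) x / x) z = 2 * struveIterSum k z := by
  induction k generalizing z with
  | zero =>
    rw [iteratedDeriv_zero, struveIterSum, sum_range_one, hermiteCoeff_zero_right, struveTerm]
    simp only [CharP.cast_eq_zero, neg_zero, zero_sub, add_zero, zero_add, pow_one, one_mul]
    field_simp
  | succ k ih =>
    have hev : iteratedDeriv k (fun x => struveH (-1) x / x) =ᶠ[nhds z]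
        fun x => 2 * struveIterSum k x :=
      (eventually_ne_nhds hz).mono fun x hx => ih hx
    rw [iteratedDeriv_succ, hev.deriv_eq]
    exact ((hasDerivAt_struveIterSum k hz).const_mul 2).deriv

/-- for every `k : ℕ` and `z ≠ 0`,
`d^k/dz^k [H₋₁(z)/z] = 2 k! ∑_{i=0}^{⌊k/2⌋} 1/(i!(k-2i)!) · H_{-k-1+i}(z)/(2z)^{i+1}`. -/
theorem iteratedDeriv_struveHneg1div (k : ℕ) (z : ℝ) (hz : z ≠ 0) :
    iteratedDeriv k (fun x => struveH (-1) x / x) z =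
      2 * (k.factorial : ℝ) *
        ∑ i ∈ Finset.range (k / 2 + 1),
          1 / ((i.factorial : ℝ) * ((k - 2 * i).factorial : ℝ)) *
            (struveH (-(k : ℤ) - 1 + i) z / (2 * z)^(i + 1)) := by
  rw [iteratedDeriv_struveH_neg_one_div_eq_two_mul k hz, mul_assoc, mul_sum, struveIterSum,
    ← sum_subset (f := fun i => hermiteCoeff k i * struveTerm k i z)
      (range_subset_range.2 (by omega : k / 2 + 1 ≤ k + 1))]
  · refine congrArg _ (sum_congr rfl fun i hi => ?_)
    rw [hermiteCoeff, if_pos (by rw [mem_range] at hi; omega), struveTerm]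
    ring
  · intro i _ hi
    rw [hermiteCoeff_of_lt (by rw [mem_range] at hi; omega), zero_mul]
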